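/- arXiv:2508.09259 — 5 statements merged into one kernel-verified Lean document; each statement's English description precedes it below -/
import Mathlib

section
/- Let n be a positive integer and let P₁, P₂ be Hermitian complex n×n matrices satisfying P₁² = 1, P₂² = 1 and the anticommutation relation P₁P₂ + P₂P₁ = 0. Then for any complex n×n matrix ρ that is positive semidefinite with trace 1, the expectation values ⟨P₁⟩ = Re(tr(ρ·P₁)) and ⟨P₂⟩ = Re(tr(ρ·P₂)) satisfy ⟨P₁⟩² + ⟨P₂⟩² ≤ 1. (Lemma 1 of the paper, stated for Hermitian involutions, which includes all anticommuting pairs of Pauli strings.) -/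
/-!
For real `a, b` the anticommutation makes `a • P₁ + b • P₂` a Hermitian matrix whose square is
the scalar `a² + b²`. Take `(a, b) = (⟨P₁⟩, ⟨P₂⟩)` and `s = a² + b²`: this observable has
expectation `s` and its square has expectation `s`, so nonnegativity of the variance
`⟨P²⟩ - ⟨P⟩²` gives `s² ≤ s`, i.e. `s ≤ 1`.
-/

open Matrix
open scoped ComplexOrder

section
variable {m 𝕜 : Type*} [Fintype m] [RCLike 𝕜]

theorem Matrix.PosSemidef.re_trace_mul_conjTranspose_mul_self_nonneg {ρ : Matrix m m 𝕜}
    (hρ : ρ.PosSemidef) (Q : Matrix m m 𝕜) : 0 ≤ RCLike.re (ρ * (Qᴴ * Q)).trace := by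
  rw [← Matrix.mul_assoc, trace_mul_cycle]
  exact RCLike.nonneg_iff.mp (hρ.mul_mul_conjTranspose_same Q).trace_nonneg |>.1

theorem Matrix.PosSemidef.sq_re_trace_mul_le_re_trace_mul_sq [DecidableEq m] {ρ P : Matrix m m 𝕜}
    (hρ : ρ.PosSemidef) (htr : ρ.trace = 1) (hP : P.IsHermitian) :
    RCLike.re (ρ * P).trace ^ 2 ≤ RCLike.re (ρ * P ^ 2).trace := by
  set t := RCLike.re (ρ * P).trace
  have hQ : (P - (t : 𝕜) • 1)ᴴ = P - (t : 𝕜) • 1 := by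
    simp [conjTranspose_sub, hP.eq]
  have hvar := hρ.re_trace_mul_conjTranspose_mul_self_nonneg (P - (t : 𝕜) • 1)
  rw [hQ] at hvar
  simp only [sub_mul, mul_sub, smul_mul, one_mul, mul_one, Matrix.mul_smul, trace_sub,
    trace_smul, htr, map_sub, RCLike.re_ofReal_mul, RCLike.ofReal_re, smul_eq_mul] at hvar
  rw [sq P]
  nlinarith

end

theorem sq_smul_add_smul_of_anticommute {R A : Type*} [CommRing R] [Ring A] [Algebra R A]
    {x y : A} (hx : x ^ 2 = 1) (hy : y ^ 2 = 1) (hxy : x * y + y * x = 0) (a b : R) :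
    (a • x + b • y) ^ 2 = (a ^ 2 + b ^ 2) • 1 := by
  have hyx : y * x = -(x * y) := eq_neg_of_add_eq_zero_right hxy
  simp only [sq, add_mul, mul_add, smul_mul_smul_comm] at *
  rw [hx, hy, hyx]
  module

theorem anticommuting_expectations_sq_le_one_general
    (n : ℕ)
    (P₁ P₂ : Matrix (Fin n) (Fin n) ℂ)
    (hH₁ : P₁.IsHermitian) (hH₂ : P₂.IsHermitian)
    (hsq₁ : P₁ ^ 2 = 1) (hsq₂ : P₂ ^ 2 = 1)
    (hanti : P₁ * P₂ + P₂ * P₁ = 0)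
    (ρ : Matrix (Fin n) (Fin n) ℂ)
    (hρ : ρ.PosSemidef) (htr : ρ.trace = 1) :
    ((ρ * P₁).trace).re ^ 2 + ((ρ * P₂).trace).re ^ 2 ≤ 1 := by
  set a := ((ρ * P₁).trace).re
  set b := ((ρ * P₂).trace).re
  set P := a • P₁ + b • P₂
  have hP : P.IsHermitian :=
    (hH₁.smul (IsSelfAdjoint.all a)).add (hH₂.smul (IsSelfAdjoint.all b))
  have hmean : ((ρ * P).trace).re = a ^ 2 + b ^ 2 := by
    simp only [P, mul_add, Matrix.mul_smul, trace_add, trace_smul, Complex.add_re,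
      Complex.smul_re, smul_eq_mul]
    ring
  have hsecond : ((ρ * P ^ 2).trace).re = a ^ 2 + b ^ 2 := by
    rw [sq_smul_add_smul_of_anticommute hsq₁ hsq₂ hanti, Matrix.mul_smul, mul_one,
      trace_smul, htr, Complex.smul_re, Complex.one_re, smul_eq_mul, mul_one]
  have hvar : ((ρ * P).trace).re ^ 2 ≤ ((ρ * P ^ 2).trace).re :=
    hρ.sq_re_trace_mul_le_re_trace_mul_sq htr hP
  rw [hmean, hsecond] at hvar
  nlinarith [sq_nonneg a, sq_nonneg b]

/-- Lemma 1: two anticommuting Hermitian involutions have expectation values whose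
squares sum to at most 1 in any quantum state. -/
theorem anticommuting_expectations_sq_le_one
    (n : ℕ) (hn : 0 < n)
    (P₁ P₂ : Matrix (Fin n) (Fin n) ℂ)
    (hH₁ : P₁.IsHermitian) (hH₂ : P₂.IsHermitian)
    (hsq₁ : P₁ ^ 2 = 1) (hsq₂ : P₂ ^ 2 = 1)
    (hanti : P₁ * P₂ + P₂ * P₁ = 0)
    (ρ : Matrix (Fin n) (Fin n) ℂ)
    (hρ : ρ.PosSemidef) (htr : ρ.trace = 1) :
    ((ρ * P₁).trace).re ^ 2 + ((ρ * P₂).trace).re ^ 2 ≤ 1 :=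
  anticommuting_expectations_sq_le_one_general n P₁ P₂ hH₁ hH₂ hsq₁ hsq₂ hanti ρ hρ htr
end

section
/- Let N ≥ 3 be an odd integer, let ρ be an N-qubit quantum state, let 0 ≤ ε ≤ 1, and suppose ⟨U_X⟩_ρ ≥ 1 − ε, where U_X = ∏_{i even} X_i is the product of X over the even 0-based sites 0, 2, …, N−1. Then each of the following expectation values is at most √(2ε) in absolute value: |⟨Z_0·X_1⟩_ρ|, |⟨X_{N-2}·Z_{N-1}⟩_ρ|, and, for every 0 ≤ i ≤ N−3, |⟨Z_i·Z_{i+1}·X_{i+2}⟩_ρ| and |⟨X_i·Z_{i+1}·Z_{i+2}⟩_ρ|. (Corollary 1 of the paper, in 0-based site labels.) -/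
open Matrix
open scoped ComplexOrder

/-- The single-site Pauli `X` operator on site `i` of `N` qubits. -/
def PauliX (N : ℕ) (i : Fin N) : Matrix (Fin N → Fin 2) (Fin N → Fin 2) ℂ :=
  Matrix.of fun f g => if f i ≠ g i ∧ ∀ j, j ≠ i → f j = g j then 1 else 0

/-- The single-site Pauli `Z` operator on site `i` of `N` qubits. -/
def PauliZ (N : ℕ) (i : Fin N) : Matrix (Fin N → Fin 2) (Fin N → Fin 2) ℂ :=
  Matrix.of fun f g => if f = g then (-1 : ℂ) ^ (f i : ℕ) else 0

/-- The uniform `X`-string `U_X = ∏_{i even} X_i` over the even 0-based sites. -/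
noncomputable def UX (N : ℕ) : Matrix (Fin N → Fin 2) (Fin N → Fin 2) ℂ :=
  (((List.finRange N).filter fun i : Fin N => (i : ℕ) % 2 = 0).map (PauliX N)).prod

/-- The 1D graph state on `N` qubits,
`ψ_g(b) = 2^{−N/2}·(−1)^{Σ_{i=0}^{N−2} (b i)·(b (i+1))}`. -/
noncomputable def graphState (N : ℕ) : (Fin N → Fin 2) → ℂ := fun b =>
  (-1 : ℂ) ^ (∑ i : Fin N, if h : (i : ℕ) + 1 < N then
      (b i : ℕ) * (b ⟨(i : ℕ) + 1, h⟩ : ℕ) else 0)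
    / (Real.sqrt 2 : ℂ) ^ N

/-! The string `U_X` acts on bit strings as translation by the indicator of the even sites, so it
commutes with every `X_j`, while `Z_a` commutes or anticommutes with it according to the parity
of `a`. Each listed term is a unitary with exactly one `Z` on an even site, hence anticommutes
with `U_X`. For a unitary `A` anticommuting with a self-adjoint involution `U`, the operator
`Q = 1 - U` satisfies `QA + AQ = 2A` and `Q² = 2Q`, so the Cauchy–Schwarz inequality for
`(B, C) ↦ tr(ρ B† C)` gives `|⟨A⟩| ≤ √⟨Q²⟩ = √(2(1 - ⟨U⟩)) ≤ √(2ε)`. -/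

def Anticommute {R : Type*} [Mul R] [Neg R] (a b : R) : Prop := a * b = -(b * a)

section Anticommute

variable {R : Type*} [Semigroup R] [HasDistribNeg R] {a b c : R}

theorem Anticommute.mul_commute (ha : Anticommute a c) (hb : Commute b c) :
    Anticommute (a * b) c := by
  rw [Anticommute, mul_assoc, hb.eq, ← mul_assoc, ha, neg_mul, mul_assoc]

theorem Commute.mul_anticommute (ha : Commute a c) (hb : Anticommute b c) :
    Anticommute (a * b) c := by
  rw [Anticommute, mul_assoc, hb, mul_neg, ← mul_assoc, ha.eq, mul_assoc]

end Anticommute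

section StateBound

variable {n : Type*} [Fintype n]

theorem norm_trace_mul_conjTranspose_mul_le
    {ρ : Matrix n n ℂ} (hρ : ρ.PosSemidef) (A B : Matrix n n ℂ) :
    ‖(ρ * (Aᴴ * B)).trace‖ ≤
      √(ρ * (Aᴴ * A)).trace.re * √(ρ * (Bᴴ * B)).trace.re := by
  let _ := ρ.toMatrixSeminormedAddCommGroup hρ
  let _ := ρ.toMatrixInnerProductSpace hρ
  have inner_eq (C D : Matrix n n ℂ) : inner ℂ C D = (ρ * (Cᴴ * D)).trace := by
    change (D * ρ * Cᴴ).trace = _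
    rw [trace_mul_comm ρ, trace_mul_comm (D * ρ), Matrix.mul_assoc]
  have h := norm_inner_le_norm (𝕜 := ℂ) A B
  rwa [norm_eq_sqrt_re_inner (𝕜 := ℂ) A, norm_eq_sqrt_re_inner (𝕜 := ℂ) B, inner_eq,
    inner_eq, inner_eq] at h

theorem norm_trace_mul_le_of_anticommute [DecidableEq n] {ρ U A : Matrix n n ℂ}
    (hρ : ρ.PosSemidef) (htr : ρ.trace = 1) (hU : IsSelfAdjoint U) (hU2 : U * U = 1)
    (hA : A ∈ unitary (Matrix n n ℂ)) (hAU : Anticommute A U) :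
    ‖(ρ * A).trace‖ ≤ √(2 * (1 - (ρ * U).trace.re)) := by
  set Q := 1 - U
  have hQ : Qᴴ = Q := by
    rw [conjTranspose_sub, conjTranspose_one, ← star_eq_conjTranspose, hU.star_eq]
  have hQQ : Qᴴ * Q = Q + Q := by
    rw [hQ, sub_mul, mul_sub, mul_sub, hU2]; simp only [Q]; noncomm_ring
  have hsplit : Qᴴ * A + (Aᴴ)ᴴ * Q = A + A := by
    rw [hQ, conjTranspose_conjTranspose, sub_mul, mul_sub, hAU]; noncomm_ring
  have hunit : ∀ B ∈ unitary (Matrix n n ℂ), (ρ * (Bᴴ * B)).trace.re = 1 := fun B hB => by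
    rw [← star_eq_conjTranspose, Unitary.star_mul_self_of_mem hB, Matrix.mul_one, htr,
      Complex.one_re]
  have hQexp : (ρ * (Qᴴ * Q)).trace.re = 2 * (1 - (ρ * U).trace.re) := by
    rw [hQQ, Matrix.mul_add, trace_add, Complex.add_re, Matrix.mul_sub, Matrix.mul_one, trace_sub,
      htr, Complex.sub_re, Complex.one_re]
    ring
  have hCS := norm_trace_mul_conjTranspose_mul_le hρ
  have h2 : 2 * ‖(ρ * A).trace‖ ≤ 2 * √(2 * (1 - (ρ * U).trace.re)) := calc
    2 * ‖(ρ * A).trace‖ = ‖(ρ * (Qᴴ * A)).trace + (ρ * ((Aᴴ)ᴴ * Q)).trace‖ := by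
      rw [← trace_add, ← Matrix.mul_add, hsplit, Matrix.mul_add, trace_add, ← two_mul,
        norm_mul, Complex.norm_two]
    _ ≤ √(ρ * (Qᴴ * Q)).trace.re * √(ρ * (Aᴴ * A)).trace.re
        + √(ρ * ((Aᴴ)ᴴ * Aᴴ)).trace.re * √(ρ * (Qᴴ * Q)).trace.re :=
      (norm_add_le _ _).trans (add_le_add (hCS Q A) (hCS Aᴴ Q))
    _ = 2 * √(2 * (1 - (ρ * U).trace.re)) := by
      rw [hunit A hA, hunit Aᴴ (Unitary.star_mem hA), hQexp, Real.sqrt_one]; ring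
  linarith

end StateBound

section Translation

variable (R : Type*) [Semiring R] {G : Type*} [AddCommGroup G] [DecidableEq G]

abbrev translationMatrix (v : G) : Matrix G G R := (Equiv.addRight v).permMatrix R

variable {R}

@[simp]
theorem translationMatrix_apply (v : G) (f g : G) :
    translationMatrix R v f g = if f + v = g then 1 else 0 := by
  simp [PEquiv.toMatrix_apply]

theorem translationMatrix_zero : translationMatrix R (0 : G) = 1 := by
  rw [translationMatrix, Equiv.addRight_zero, permMatrix_one]

theorem conjTranspose_translationMatrix [StarRing R] (v : G) :
    (translationMatrix R v)ᴴ = translationMatrix R (-v) := by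
  rw [translationMatrix, conjTranspose_permMatrix, Equiv.neg_addRight]

variable [Fintype G]

theorem translationMatrix_add (v w : G) :
    translationMatrix R (v + w) = translationMatrix R v * translationMatrix R w := by
  rw [translationMatrix, Equiv.addRight_add, permMatrix_mul]

theorem translationMatrix_list_sum (l : List G) :
    translationMatrix R l.sum = (l.map (translationMatrix R)).prod := by
  induction l with
  | nil => exact translationMatrix_zero
  | cons v l ih => rw [List.sum_cons, translationMatrix_add, ih, List.map_cons, List.prod_cons]

theorem commute_translationMatrix (v w : G) :
    Commute (translationMatrix R v) (translationMatrix R w) := by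
  rw [Commute, SemiconjBy, ← translationMatrix_add, ← translationMatrix_add, add_comm]

theorem translationMatrix_mem_unitary [StarRing R] (v : G) :
    translationMatrix R v ∈ unitary (Matrix G G R) := by
  rw [Unitary.mem_iff, star_eq_conjTranspose, conjTranspose_translationMatrix,
    ← translationMatrix_add, ← translationMatrix_add, neg_add_cancel, add_neg_cancel,
    translationMatrix_zero]
  exact ⟨rfl, rfl⟩

theorem diagonal_mul_translationMatrix (d : G → R) (v : G) :
    diagonal d * translationMatrix R v =
      translationMatrix R v * diagonal fun g => d (g - v) := by
  ext f g
  rw [PEquiv.toMatrix_toPEquiv_mul, PEquiv.mul_toMatrix_toPEquiv]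
  by_cases h : f + v = g
  · subst h; simp
  · simp [h, eq_add_neg_iff_add_eq]

end Translation

theorem neg_eq_self_of_fin_two {ι : Type*} (v : ι → Fin 2) : -v = v :=
  funext fun j => (by decide : ∀ x : Fin 2, -x = x) (v j)

section Pauli

variable {N : ℕ}

theorem pauliX_eq_translationMatrix (i : Fin N) :
    PauliX N i = translationMatrix ℂ (Pi.single i 1) := by
  ext f g
  simp only [PauliX, of_apply, translationMatrix_apply, funext_iff, Pi.add_apply]
  refine if_congr ⟨fun ⟨hi, hj⟩ j => ?_, fun h => ⟨?_, fun j hj => ?_⟩⟩ rfl rfl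
  · rcases eq_or_ne j i with rfl | hji
    · simp only [Pi.single_eq_same]; omega
    · simp [hji, hj j hji]
  · have := h i; simp only [Pi.single_eq_same] at this; omega
  · simpa [hj] using h j

theorem pauliZ_eq_diagonal (i : Fin N) :
    PauliZ N i = diagonal fun f => (-1 : ℂ) ^ (f i : ℕ) := rfl

def evenSites (N : ℕ) : Fin N → Fin 2 := fun j => if Even (j : ℕ) then 1 else 0

theorem UX_eq_translationMatrix : UX N = translationMatrix ℂ (evenSites N) := by
  have hX : PauliX N = translationMatrix ℂ ∘ fun i => Pi.single i 1 :=
    funext pauliX_eq_translationMatrix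
  rw [UX, hX, ← List.map_map, ← translationMatrix_list_sum, ← List.sum_toFinset _
    ((List.nodup_finRange N).filter _)]
  congr 1
  ext j
  simp [evenSites, Finset.sum_apply, Nat.even_iff]

theorem pauliX_mem_unitary (i : Fin N) : PauliX N i ∈ unitary _ := by
  rw [pauliX_eq_translationMatrix]
  exact translationMatrix_mem_unitary _

theorem pauliZ_mem_unitary (i : Fin N) : PauliZ N i ∈ unitary _ := by
  rw [mem_unitaryGroup_iff', pauliZ_eq_diagonal, star_eq_conjTranspose, diagonal_conjTranspose,
    diagonal_mul_diagonal, ← diagonal_one]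
  congr 1
  ext f
  simp [← mul_pow]

theorem isSelfAdjoint_UX : IsSelfAdjoint (UX N) := by
  rw [UX_eq_translationMatrix, IsSelfAdjoint, star_eq_conjTranspose,
    conjTranspose_translationMatrix, neg_eq_self_of_fin_two]

theorem UX_mul_self : UX N * UX N = 1 := by
  rw [UX_eq_translationMatrix, ← translationMatrix_add,
    neg_eq_iff_add_eq_zero.mp (neg_eq_self_of_fin_two _),
    translationMatrix_zero]

theorem pauliZ_mul_translationMatrix (a : Fin N) (v : Fin N → Fin 2) :
    PauliZ N a * translationMatrix ℂ v =
      (-1 : ℂ) ^ (v a : ℕ) • (translationMatrix ℂ v * PauliZ N a) := by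
  have hsign : ∀ x y : Fin 2,
      (-1 : ℂ) ^ ((x - y : Fin 2) : ℕ) = (-1 : ℂ) ^ (y : ℕ) * (-1 : ℂ) ^ (x : ℕ) := by
    intro x y; fin_cases x <;> fin_cases y <;> simp
  rw [pauliZ_eq_diagonal, diagonal_mul_translationMatrix, ← mul_smul_comm, ← diagonal_smul]
  congr 2
  ext f
  simp only [Pi.sub_apply, hsign, Pi.smul_apply, smul_eq_mul]

theorem anticommute_pauliZ_UX {a : Fin N} (ha : Even (a : ℕ)) :
    Anticommute (PauliZ N a) (UX N) := by
  rw [Anticommute, UX_eq_translationMatrix, pauliZ_mul_translationMatrix]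
  simp [evenSites, ha]

theorem commute_pauliZ_UX {a : Fin N} (ha : ¬Even (a : ℕ)) : Commute (PauliZ N a) (UX N) := by
  rw [Commute, SemiconjBy, UX_eq_translationMatrix, pauliZ_mul_translationMatrix]
  simp [evenSites, ha]

theorem commute_pauliX_UX (b : Fin N) : Commute (PauliX N b) (UX N) := by
  rw [pauliX_eq_translationMatrix, UX_eq_translationMatrix]
  exact commute_translationMatrix _ _

theorem anticommute_pauliZ_mul_pauliZ_UX {a b : Fin N} (hab : (b : ℕ) = a + 1) :
    Anticommute (PauliZ N a * PauliZ N b) (UX N) := by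
  rcases Nat.even_or_odd a with h | h
  · exact (anticommute_pauliZ_UX h).mul_commute
      (commute_pauliZ_UX (by rwa [hab, Nat.even_add_one, not_not]))
  · exact (commute_pauliZ_UX (Nat.not_even_iff_odd.mpr h)).mul_anticommute
      (anticommute_pauliZ_UX (by rwa [hab, Nat.even_add_one, Nat.not_even_iff_odd]))

end Pauli

/-- Corollary 1 (0-based labels): if `⟨U_X⟩ ≥ 1 − ε` in an `N`-qubit state `ρ` (`N ≥ 3`
odd), then the boundary terms `Z_0 X_1`, `X_{N−2} Z_{N−1}` and all bulk terms
`Z_i Z_{i+1} X_{i+2}`, `X_i Z_{i+1} Z_{i+2}` have expectation at most `√(2ε)` in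
absolute value. -/
theorem corollary1_anticommuting_terms_small
    (N : ℕ) (hN : 3 ≤ N) (hodd : Odd N)
    (ρ : Matrix (Fin N → Fin 2) (Fin N → Fin 2) ℂ)
    (hρ : ρ.PosSemidef) (htr : ρ.trace = 1)
    (ε : ℝ)
    (hU : ((ρ * UX N).trace).re ≥ 1 - ε) :
    |((ρ * (PauliZ N ⟨0, by omega⟩ * PauliX N ⟨1, by omega⟩)).trace).re| ≤ Real.sqrt (2 * ε) ∧
    |((ρ * (PauliX N ⟨N - 2, by omega⟩ * PauliZ N ⟨N - 1, by omega⟩)).trace).re|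
      ≤ Real.sqrt (2 * ε) ∧
    ∀ i : ℕ, ∀ hi : i + 2 < N,
      |((ρ * (PauliZ N ⟨i, by omega⟩ * PauliZ N ⟨i + 1, by omega⟩ *
          PauliX N ⟨i + 2, hi⟩)).trace).re| ≤ Real.sqrt (2 * ε) ∧
      |((ρ * (PauliX N ⟨i, by omega⟩ * PauliZ N ⟨i + 1, by omega⟩ *
          PauliZ N ⟨i + 2, hi⟩)).trace).re| ≤ Real.sqrt (2 * ε) := by
  have bound (A) (hA : A ∈ unitary _) (hAU : Anticommute A (UX N)) :
      |((ρ * A).trace).re| ≤ √(2 * ε) :=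
    (Complex.abs_re_le_norm _).trans <|
      (norm_trace_mul_le_of_anticommute hρ htr isSelfAdjoint_UX UX_mul_self hA hAU).trans <|
        Real.sqrt_le_sqrt (by linarith)
  have hX := pauliX_mem_unitary (N := N)
  have hZ := pauliZ_mem_unitary (N := N)
  refine ⟨bound _ (mul_mem (hZ _) (hX _)) ?_, bound _ (mul_mem (hX _) (hZ _)) ?_,
    fun i hi => ⟨bound _ (mul_mem (mul_mem (hZ _) (hZ _)) (hX _)) ?_,
      bound _ (mul_mem (mul_mem (hX _) (hZ _)) (hZ _)) ?_⟩⟩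
  · exact (anticommute_pauliZ_UX Even.zero).mul_commute (commute_pauliX_UX _)
  · exact (commute_pauliX_UX _).mul_anticommute
      (anticommute_pauliZ_UX (Nat.Odd.sub_odd hodd odd_one))
  · exact (anticommute_pauliZ_mul_pauliZ_UX rfl).mul_commute (commute_pauliX_UX _)
  · rw [mul_assoc]
    exact (commute_pauliX_UX _).mul_anticommute (anticommute_pauliZ_mul_pauliZ_UX rfl)
end

section
/- Let P₁, …, P_n be pairwise commuting Hermitian complex d×d matrices with Pᵢ² = 1 for each i, and let ψ ∈ ℂ^d be a unit vector such that the joint fixed space {v ∈ ℂ^d : Pᵢ v = v for all i} is exactly the one-dimensional span of ψ. Let ρ be a complex d×d matrix that is positive semidefinite with trace 1, and let ε₁, …, ε_n ≥ 0 satisfy Re(tr(ρ·Pᵢ)) ≥ 1 − εᵢ for each i. Then the fidelity satisfies ⟨ψ|ρ|ψ⟩ ≥ 1 − (Σᵢ εᵢ)/2. (First part of Lemma 2.) -/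
/-!
Let `Qᵢ = (1 + Pᵢ)/2`, the projection onto the `+1` eigenspace of `Pᵢ`. The `Qᵢ` are commuting
projections, so their product `Π` is the projection onto the joint fixed space, i.e. `Π = |ψ⟩⟨ψ|`.
For commuting projections `p, q` one has `(1 - p) + (1 - q) - (1 - pq) = (1 - p)(1 - q) ≥ 0`,
which iterates to the operator union bound `1 - Π ≤ ∑ᵢ (1 - Qᵢ)`. Taking the expectation in `ρ`
gives `1 - ⟨ψ|ρ|ψ⟩ ≤ ∑ᵢ (1 - tr(ρPᵢ))/2 ≤ (∑ᵢ εᵢ)/2`.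
-/

open Matrix
open scoped ComplexOrder MatrixOrder

theorem IsIdempotentElem.mul_list_prod_of_mem {M : Type*} [Monoid M] {a : M} {l : List M}
    (ha : IsIdempotentElem a) (hal : a ∈ l) (hc : ∀ p ∈ l, ∀ q ∈ l, Commute p q) :
    a * l.prod = l.prod := by
  classical
  rw [← List.prod_erase_of_comm hal fun p hp q hq => (hc p hp q hq).eq, ← mul_assoc, ha.eq]

theorem IsStarProjection.list_prod {R : Type*} [Semiring R] [StarRing R] {l : List R}
    (hl : ∀ p ∈ l, IsStarProjection p) (hc : ∀ p ∈ l, ∀ q ∈ l, Commute p q) :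
    IsStarProjection l.prod := by
  induction l with
  | nil => exact .one R
  | cons p l ih =>
    have hl' : ∀ q ∈ l, IsStarProjection q := fun q hq => hl q (List.mem_cons_of_mem p hq)
    have hc' : ∀ q ∈ l, ∀ r ∈ l, Commute q r :=
      fun q hq r hr => hc q (List.mem_cons_of_mem p hq) r (List.mem_cons_of_mem p hr)
    exact (hl p List.mem_cons_self).mul (ih hl' hc') <|
      Commute.list_prod_right l p fun q hq => hc p List.mem_cons_self q (List.mem_cons_of_mem p hq)

section StarOrderedRing

variable {R : Type*} [Ring R] [PartialOrder R] [StarRing R] [StarOrderedRing R]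

theorem IsStarProjection.one_sub_mul_le {p q : R} (hp : IsStarProjection p)
    (hq : IsStarProjection q) (hpq : Commute p q) : 1 - p * q ≤ (1 - p) + (1 - q) := by
  have h : (1 - p) + (1 - q) - (1 - p * q) = (1 - p) * (1 - q) := by noncomm_ring
  rw [← sub_nonneg, h]
  exact (hp.one_sub.mul hq.one_sub
    ((Commute.one_right _).sub_right ((Commute.one_left q).sub_left hpq))).nonneg

theorem IsStarProjection.one_sub_list_prod_le {l : List R} (hl : ∀ p ∈ l, IsStarProjection p)
    (hc : ∀ p ∈ l, ∀ q ∈ l, Commute p q) : 1 - l.prod ≤ (l.map (1 - ·)).sum := by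
  induction l with
  | nil => simp
  | cons p l ih =>
    have hl' : ∀ q ∈ l, IsStarProjection q := fun q hq => hl q (List.mem_cons_of_mem p hq)
    have hc' : ∀ q ∈ l, ∀ r ∈ l, Commute q r :=
      fun q hq r hr => hc q (List.mem_cons_of_mem p hq) r (List.mem_cons_of_mem p hr)
    have hp_comm : Commute p l.prod :=
      Commute.list_prod_right l p fun q hq => hc p List.mem_cons_self q (List.mem_cons_of_mem p hq)
    calc 1 - (p :: l).prod ≤ (1 - p) + (1 - l.prod) :=
          (hl p List.mem_cons_self).one_sub_mul_le (IsStarProjection.list_prod hl' hc') hp_comm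
      _ ≤ (1 - p) + (l.map (1 - ·)).sum := by gcongr; exact ih hl' hc'

end StarOrderedRing

section Involution

variable {𝕜 R : Type*} [Field 𝕜] [Ring R] [Algebra 𝕜 R]

theorem mul_inv_two_smul_one_add_of_mul_self {u : R} (hu : u * u = 1) :
    u * ((2⁻¹ : 𝕜) • (1 + u)) = (2⁻¹ : 𝕜) • (1 + u) := by
  rw [mul_smul_comm, mul_add, mul_one, hu, add_comm]

theorem IsSelfAdjoint.isStarProjection_inv_two_smul_one_add [NeZero (2 : 𝕜)] [StarRing 𝕜]
    [StarRing R] [StarModule 𝕜 R] {u : R} (hsa : IsSelfAdjoint u) (hu : u * u = 1) :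
    IsStarProjection ((2⁻¹ : 𝕜) • (1 + u)) where
  isIdempotentElem := by
    rw [IsIdempotentElem, smul_mul_assoc, add_mul, one_mul,
      mul_inv_two_smul_one_add_of_mul_self hu, ← two_smul 𝕜, smul_smul,
      inv_mul_cancel₀ two_ne_zero, one_smul]
  isSelfAdjoint := .smul (by simp [IsSelfAdjoint]) ((IsSelfAdjoint.one R).add hsa)

end Involution

namespace Matrix

variable {𝕜 n : Type*} [Fintype n]

theorem list_prod_mulVec_eq_self [CommSemiring 𝕜] [DecidableEq n] {l : List (Matrix n n 𝕜)}
    {v : n → 𝕜} (h : ∀ A ∈ l, A *ᵥ v = v) : l.prod *ᵥ v = v := by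
  induction l with
  | nil => exact one_mulVec v
  | cons A l ih =>
    rw [List.prod_cons, ← mulVec_mulVec, ih fun B hB => h B (List.mem_cons_of_mem A hB),
      h A List.mem_cons_self]

theorem trace_mul_vecMulVec_star [CommSemiring 𝕜] [StarRing 𝕜] (ρ : Matrix n n 𝕜) (ψ : n → 𝕜) :
    (ρ * vecMulVec ψ (star ψ)).trace = star ψ ⬝ᵥ (ρ *ᵥ ψ) := by
  rw [mul_vecMulVec, trace_vecMulVec, dotProduct_comm]

theorem trace_mul_one_sub_inv_two_smul_one_add [Field 𝕜] [CharZero 𝕜] [DecidableEq n]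
    {ρ : Matrix n n 𝕜} (hρ : ρ.trace = 1) (P : Matrix n n 𝕜) :
    (ρ * (1 - (2⁻¹ : 𝕜) • (1 + P))).trace = 2⁻¹ * (1 - (ρ * P).trace) := by
  rw [mul_sub, mul_smul_comm, mul_add, mul_one, trace_sub, trace_smul, trace_add, hρ,
    smul_eq_mul]
  ring

theorem IsHermitian.eq_vecMulVec_star [CommRing 𝕜] [StarRing 𝕜] {E : Matrix n n 𝕜}
    (hE : E.IsHermitian) {ψ : n → 𝕜} (hψ : star ψ ⬝ᵥ ψ = 1) (hEψ : E *ᵥ ψ = ψ)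
    (hrange : ∀ v, ∃ c : 𝕜, E *ᵥ v = c • ψ) : E = vecMulVec ψ (star ψ) := by
  refine mulVec_injective (funext fun v => ?_)
  obtain ⟨c, hc⟩ := hrange v
  have hc' : c = star ψ ⬝ᵥ v := by
    have hrow : star ψ ᵥ* E = star ψ := by
      rw [← hE.eq, ← star_mulVec, hEψ]
    rw [← mul_one c, ← hψ, ← smul_eq_mul, ← dotProduct_smul, ← hc, dotProduct_mulVec, hrow]
  rw [hc, hc', vecMulVec_mulVec, op_smul_eq_smul]

theorem PosSemidef.trace_mul_le_trace_mul [RCLike 𝕜] {ρ A B : Matrix n n 𝕜} (hρ : ρ.PosSemidef)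
    (hAB : A ≤ B) : (ρ * A).trace ≤ (ρ * B).trace := by
  classical
  obtain ⟨X, hX⟩ := CStarAlgebra.nonneg_iff_eq_star_mul_self.mp (sub_nonneg.mpr hAB)
  have h : (ρ * (B - A)).trace = (X * ρ * Xᴴ).trace := by
    rw [hX, star_eq_conjTranspose, ← mul_assoc, trace_mul_cycle]
  rw [← sub_nonneg, ← trace_sub, ← mul_sub, h]
  exact (hρ.mul_mul_conjTranspose_same X).trace_nonneg

end Matrix

section JointFixedSpace

variable {𝕜 m : Type*} [RCLike 𝕜] [Fintype m] [DecidableEq m] {n : ℕ} {P : Fin n → Matrix m m 𝕜}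

theorem isStarProjection_of_mem_ofFn_inv_two_smul_one_add (hHerm : ∀ i, (P i).IsHermitian)
    (hP : ∀ i, P i * P i = 1) :
    ∀ q ∈ List.ofFn fun i => (2⁻¹ : 𝕜) • (1 + P i), IsStarProjection q := by
  simp only [List.mem_ofFn, forall_exists_index, forall_apply_eq_imp_iff]
  exact fun i => (hHerm i).isSelfAdjoint.isStarProjection_inv_two_smul_one_add (hP i)

theorem commute_of_mem_ofFn_inv_two_smul_one_add (hcomm : ∀ i j, Commute (P i) (P j)) :
    ∀ p ∈ List.ofFn (fun i => (2⁻¹ : 𝕜) • (1 + P i)),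
      ∀ q ∈ List.ofFn (fun i => (2⁻¹ : 𝕜) • (1 + P i)), Commute p q := by
  simp only [List.mem_ofFn, forall_exists_index, forall_apply_eq_imp_iff]
  exact fun i j => (((Commute.one_left _).add_left ((Commute.one_right _).add_right
    (hcomm i j))).smul_left _).smul_right _

theorem list_prod_ofFn_inv_two_smul_one_add_eq_vecMulVec_star
    (hHerm : ∀ i, (P i).IsHermitian) (hcomm : ∀ i j, Commute (P i) (P j))
    (hP : ∀ i, P i * P i = 1) {ψ : m → 𝕜} (hψ : star ψ ⬝ᵥ ψ = 1)
    (hfix : ∀ v, (∀ i, P i *ᵥ v = v) ↔ ∃ c : 𝕜, v = c • ψ) :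
    (List.ofFn fun i => (2⁻¹ : 𝕜) • (1 + P i)).prod = vecMulVec ψ (star ψ) := by
  set Q : Fin n → Matrix m m 𝕜 := fun i => (2⁻¹ : 𝕜) • (1 + P i)
  have hQ := isStarProjection_of_mem_ofFn_inv_two_smul_one_add hHerm hP
  have hQc := commute_of_mem_ofFn_inv_two_smul_one_add (𝕜 := 𝕜) hcomm
  set E := (List.ofFn Q).prod
  have hEψ : E *ᵥ ψ = ψ := by
    refine list_prod_mulVec_eq_self ?_
    simp only [List.mem_ofFn, forall_exists_index, forall_apply_eq_imp_iff]
    intro i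
    rw [smul_mulVec, add_mulVec, one_mulVec, (hfix ψ).mpr ⟨1, (one_smul 𝕜 ψ).symm⟩ i,
      ← two_smul 𝕜 ψ, smul_smul, inv_mul_cancel₀ two_ne_zero, one_smul]
  have hPE : ∀ i, P i * E = E := fun i => by
    have hQi : Q i ∈ List.ofFn Q := List.mem_ofFn.mpr ⟨i, rfl⟩
    have hQE : Q i * E = E := (hQ _ hQi).isIdempotentElem.mul_list_prod_of_mem hQi hQc
    rw [← hQE, ← mul_assoc, mul_inv_two_smul_one_add_of_mul_self (hP i)]
  exact IsHermitian.eq_vecMulVec_star (IsStarProjection.list_prod hQ hQc).isSelfAdjoint hψ hEψ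
    fun v => (hfix _).mp fun i => by rw [mulVec_mulVec, hPE]

end JointFixedSpace

theorem fidelity_lower_bound_from_stabilizers_general
    (n d : ℕ)
    (P : Fin n → Matrix (Fin d) (Fin d) ℂ)
    (hHerm : ∀ i, (P i).IsHermitian)
    (hcomm : ∀ i j, P i * P j = P j * P i)
    (hsq : ∀ i, P i ^ 2 = 1)
    (ψ : Fin d → ℂ) (hψ : star ψ ⬝ᵥ ψ = 1)
    (hfix : ∀ v : Fin d → ℂ, (∀ i, (P i) *ᵥ v = v) ↔ ∃ c : ℂ, v = c • ψ)
    (ρ : Matrix (Fin d) (Fin d) ℂ)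
    (hρ : ρ.PosSemidef) (htr : ρ.trace = 1)
    (ε : Fin n → ℝ)
    (hexp : ∀ i, ((ρ * P i).trace).re ≥ 1 - ε i) :
    (star ψ ⬝ᵥ (ρ *ᵥ ψ)).re ≥ 1 - (∑ i, ε i) / 2 := by
  have hP : ∀ i, P i * P i = 1 := fun i => by rw [← sq, hsq]
  have hunion : 1 - vecMulVec ψ (star ψ) ≤ ∑ i, (1 - (2⁻¹ : ℂ) • (1 + P i)) := by
    rw [← list_prod_ofFn_inv_two_smul_one_add_eq_vecMulVec_star hHerm hcomm hP hψ hfix]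
    simpa only [List.map_ofFn, List.sum_ofFn, Function.comp_apply] using
      IsStarProjection.one_sub_list_prod_le
        (isStarProjection_of_mem_ofFn_inv_two_smul_one_add hHerm hP)
        (commute_of_mem_ofFn_inv_two_smul_one_add hcomm)
  have htrace := (Complex.le_def.mp (hρ.trace_mul_le_trace_mul hunion)).1
  rw [mul_sub, mul_one, trace_sub, htr, trace_mul_vecMulVec_star, Finset.mul_sum, trace_sum]
    at htrace
  simp only [trace_mul_one_sub_inv_two_smul_one_add htr, Complex.sub_re, Complex.one_re,
    Complex.re_sum] at htrace
  have hterm : ∀ i, (2⁻¹ * (1 - (ρ * P i).trace)).re ≤ ε i / 2 := fun i => by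
    norm_num [Complex.mul_re]
    linarith [hexp i]
  have hsum := Finset.sum_le_sum fun i (_ : i ∈ Finset.univ) => hterm i
  rw [← Finset.sum_div] at hsum
  linarith

/-- First part of Lemma 2: if every stabilizer generator `Pᵢ` has expectation at least
`1 − εᵢ` in a quantum state `ρ`, and the `Pᵢ` are pairwise commuting Hermitian
involutions whose joint fixed space is exactly the span of the unit vector `ψ`, then
the fidelity satisfies `⟨ψ|ρ|ψ⟩ ≥ 1 − (Σᵢ εᵢ)/2`. -/
theorem fidelity_lower_bound_from_stabilizers
    (n d : ℕ)
    (P : Fin n → Matrix (Fin d) (Fin d) ℂ)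
    (hHerm : ∀ i, (P i).IsHermitian)
    (hcomm : ∀ i j, P i * P j = P j * P i)
    (hsq : ∀ i, P i ^ 2 = 1)
    (ψ : Fin d → ℂ) (hψ : star ψ ⬝ᵥ ψ = 1)
    (hfix : ∀ v : Fin d → ℂ, (∀ i, (P i) *ᵥ v = v) ↔ ∃ c : ℂ, v = c • ψ)
    (ρ : Matrix (Fin d) (Fin d) ℂ)
    (hρ : ρ.PosSemidef) (htr : ρ.trace = 1)
    (ε : Fin n → ℝ) (hε : ∀ i, 0 ≤ ε i)
    (hexp : ∀ i, ((ρ * P i).trace).re ≥ 1 - ε i) :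
    (star ψ ⬝ᵥ (ρ *ᵥ ψ)).re ≥ 1 - (∑ i, ε i) / 2 :=
  fidelity_lower_bound_from_stabilizers_general n d P hHerm hcomm hsq ψ hψ hfix ρ hρ htr ε hexp
end

section
/- For every natural number N ≥ 1, the identity 8 · Σ_{k=1}^{N} C(N,k)·C(k+2,2) = 2^N·(N² + 7N + 8) − 8 holds, where C(·,·) denotes the binomial coefficient. (This is the paper's counting formula 𝒩(N) = Σ_{k=1}^{N} C(N,k)·C(k+2,2) = 2^{N−3}(N² + 7N + 8) − 1 for the number of independent symmetrized operators accessible by uniform measurements on N qubits, cleared of the denominator 8.) -/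
/-!
Vandermonde's identity gives `C(k+2,2) = C(k,0) + 2 C(k,1) + C(k,2)`, and counting pairs
`J ⊆ K ⊆ [n]` with `|J| = j` gives `∑ₖ C(n,k) C(k,j) = C(n,j) 2^(n-j)`. Hence eight times the
full sum over `0 ≤ k ≤ n` is `2^n (8 + 8n + n(n-1)) = 2^n (n² + 7n + 8)`, and the `k = 0` term
contributes the `8` that is subtracted.
-/

open Finset

-- The factor `2 ^ j` on the left replaces `2 ^ (n - j)`, whose truncated subtraction breaks `n < j`.
theorem Nat.two_pow_mul_sum_choose_mul_choose (n j : ℕ) :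
    2 ^ j * ∑ k ∈ range (n + 1), n.choose k * k.choose j = n.choose j * 2 ^ n := by
  rcases le_or_gt j n with hjn | hnj
  · obtain ⟨m, rfl⟩ := Nat.exists_eq_add_of_le hjn
    have below_j : ∑ k ∈ range j, (j + m).choose k * k.choose j = 0 :=
      sum_eq_zero fun k hk => by rw [Nat.choose_eq_zero_of_lt (mem_range.1 hk), mul_zero]
    rw [show j + m + 1 = j + (m + 1) by omega, sum_range_add, below_j, zero_add]
    simp_rw [Nat.choose_mul (Nat.le_add_right j _), Nat.add_sub_cancel_left, ← mul_sum,
      Nat.sum_range_choose, pow_add]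
    ring
  · have above_n : ∀ k ∈ range (n + 1), n.choose k * k.choose j = 0 := fun k hk => by
      rw [Nat.choose_eq_zero_of_lt (lt_of_lt_of_le' hnj (mem_range_succ_iff.1 hk)), mul_zero]
    rw [sum_eq_zero above_n, Nat.choose_eq_zero_of_lt hnj, mul_zero, zero_mul]

theorem Nat.add_two_choose_two (k : ℕ) :
    (k + 2).choose 2 = k.choose 0 + 2 * k.choose 1 + k.choose 2 := by
  simp only [Nat.choose_succ_succ, Nat.choose_zero_right, Nat.choose_one_right]
  ring

theorem Nat.two_mul_choose_two_add_self (n : ℕ) : 2 * n.choose 2 + n = n ^ 2 := by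
  induction n with
  | zero => rfl
  | succ n ih => rw [Nat.choose_succ_succ, Nat.choose_one_right]; linarith

theorem Nat.eight_mul_sum_range_choose_mul_add_two_choose_two (n : ℕ) :
    8 * ∑ k ∈ range (n + 1), n.choose k * (k + 2).choose 2 = 2 ^ n * (n ^ 2 + 7 * n + 8) := by
  have h0 := Nat.two_pow_mul_sum_choose_mul_choose n 0
  have h1 := Nat.two_pow_mul_sum_choose_mul_choose n 1
  have h2 := Nat.two_pow_mul_sum_choose_mul_choose n 2
  rw [pow_zero, one_mul, Nat.choose_zero_right n] at h0
  rw [pow_one, Nat.choose_one_right n] at h1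
  simp only [Nat.add_two_choose_two, mul_add, sum_add_distrib, mul_left_comm _ 2, ← mul_sum]
  rw [← Nat.two_mul_choose_two_add_self]
  linear_combination 8 * h0 + 8 * h1 + 2 * h2

theorem uniform_measurement_operator_count_general
    (N : ℕ) :
    8 * ∑ k ∈ Finset.Icc 1 N, N.choose k * (k + 2).choose 2
      = 2 ^ N * (N ^ 2 + 7 * N + 8) - 8 := by
  have h := Nat.eight_mul_sum_range_choose_mul_add_two_choose_two N
  rw [range_eq_Ico, sum_eq_sum_Ico_succ_bot N.add_one_pos, Ico_add_one_right_eq_Icc] at h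
  simp only [zero_add, Nat.choose_zero_right, Nat.choose_self, one_mul] at h
  omega

/-- The paper's counting formula for the number of independent symmetrized operators
accessible by uniform measurements on `N` qubits, cleared of the denominator 8:
`8 · Σ_{k=1}^{N} C(N,k)·C(k+2,2) = 2^N·(N² + 7N + 8) − 8`. -/
theorem uniform_measurement_operator_count
    (N : ℕ) (hN : 1 ≤ N) :
    8 * ∑ k ∈ Finset.Icc 1 N, N.choose k * (k + 2).choose 2
      = 2 ^ N * (N ^ 2 + 7 * N + 8) - 8 :=
  uniform_measurement_operator_count_general N
end

section
/- Let N ≥ 3 be odd and let ψ_g be the 1D graph state with amplitudes ψ_g(b) = 2^{−N/2}·(−1)^{Σ_{i=0}^{N−2} (b i)·(b (i+1))}. Then the uniform X-string over the even 0-based sites, U_X = ∏_{i ∈ {0,2,…,N−1}} X_i, satisfies U_X ψ_g = ψ_g. (The ℤ₂ symmetry of the 1D graph state that makes uniform certification possible; these are the odd sites 1, 3, …, N in the paper's 1-based labeling.) -/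
/-!
Flipping the even sites adds to the bit string the indicator of the even sites. No two
adjacent sites are both even, so modulo 2 each edge term `b i * b (i + 1)` of the exponent
changes by the bit at the odd endpoint of the edge. Since `N` is odd, every odd site is
interior, hence the endpoint of exactly two edges, so the exponent changes by an even number.
-/

open Matrix
open scoped ComplexOrder

lemma pauliX_mulVec {N : ℕ} (i : Fin N) (v : (Fin N → Fin 2) → ℂ) :
    PauliX N i *ᵥ v = fun f => v (Function.update f i (f i + 1)) := by
  funext f
  rw [mulVec, dotProduct, Finset.sum_eq_single (Function.update f i (f i + 1))]
  · simp +contextual [PauliX]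
  · intro g _ hg
    suffices ¬(f i ≠ g i ∧ ∀ j, j ≠ i → f j = g j) by simp [PauliX, this]
    rintro ⟨hi, hj⟩
    refine hg (funext fun j => ?_)
    rcases eq_or_ne j i with rfl | hji
    · simp only [Function.update_self]
      revert hi; generalize f j = x; generalize g j = y
      decide +revert
    · simp [Function.update_of_ne hji, hj j hji]
  · simp

lemma list_prod_pauliX_mulVec {N : ℕ} {l : List (Fin N)} (hl : l.Nodup)
    (v : (Fin N → Fin 2) → ℂ) :
    (l.map (PauliX N)).prod *ᵥ v = fun f => v (fun j => if j ∈ l then f j + 1 else f j) := by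
  induction l with
  | nil => simp
  | cons a l ih =>
    obtain ⟨ha, hl⟩ := List.nodup_cons.mp hl
    rw [List.map_cons, List.prod_cons, ← mulVec_mulVec, ih hl, pauliX_mulVec]
    funext f
    congr 1
    funext j
    rcases eq_or_ne j a with rfl | hja
    · simp [ha]
    · simp [hja]

lemma UX_mulVec (N : ℕ) (v : (Fin N → Fin 2) → ℂ) :
    UX N *ᵥ v = fun f => v (fun j => if (j : ℕ) % 2 = 0 then f j + 1 else f j) := by
  rw [UX, list_prod_pauliX_mulVec ((List.nodup_finRange N).filter _)]
  simp [List.mem_filter]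

lemma neg_one_pow_eq_of_natCast_zmod_two_eq {R : Type*} [Monoid R] [HasDistribNeg R] {m n : ℕ}
    (h : (m : ZMod 2) = n) : (-1 : R) ^ m = (-1) ^ n :=
  neg_one_pow_congr <| by rw [← ZMod.natCast_eq_zero_iff_even, ← ZMod.natCast_eq_zero_iff_even, h]

def evenIndicator (R : Type*) [Zero R] [One R] (i : ℕ) : R := if i % 2 = 0 then 1 else 0

lemma sum_range_edge_add_evenIndicator {R : Type*} [CommSemiring R] (c : ℕ → R) (m : ℕ) :
    ∑ i ∈ Finset.range (2 * m),
        (c i + evenIndicator R i) * (c (i + 1) + evenIndicator R (i + 1)) =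
      ∑ i ∈ Finset.range (2 * m), c i * c (i + 1) + 2 * ∑ j ∈ Finset.range m, c (2 * j + 1) := by
  induction m with
  | zero => simp
  | succ m ih =>
    rw [show 2 * (m + 1) = 2 * m + 1 + 1 by ring]
    simp only [Finset.sum_range_succ _ (2 * m + 1), Finset.sum_range_succ _ (2 * m),
      Finset.sum_range_succ _ m, ih]
    simp only [evenIndicator, show (2 * m) % 2 = 0 by omega, show (2 * m + 1) % 2 = 1 by omega,
      show (2 * m + 1 + 1) % 2 = 0 by omega]
    simp only [if_true, one_ne_zero, if_false, add_zero]
    ring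

def bitsZMod {N : ℕ} (b : Fin N → Fin 2) (i : ℕ) : ZMod 2 :=
  if h : i < N then ((b ⟨i, h⟩ : ℕ) : ZMod 2) else 0

lemma natCast_graphState_exponent {N : ℕ} (b : Fin N → Fin 2) :
    (((∑ i : Fin N, if h : (i : ℕ) + 1 < N then
        (b i : ℕ) * (b ⟨(i : ℕ) + 1, h⟩ : ℕ) else 0 : ℕ)) : ZMod 2) =
      ∑ i ∈ Finset.range (N - 1), bitsZMod b i * bitsZMod b (i + 1) := by
  have hterm (i : Fin N) :
      (((if h : (i : ℕ) + 1 < N then (b i : ℕ) * (b ⟨(i : ℕ) + 1, h⟩ : ℕ) else 0 : ℕ)) : ZMod 2)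
        = if (i : ℕ) + 1 < N then bitsZMod b i * bitsZMod b (i + 1) else 0 := by
    split_ifs with h <;> simp [bitsZMod, h]
  rw [Nat.cast_sum, Finset.sum_congr rfl fun i _ => hterm i,
    Fin.sum_univ_eq_sum_range (fun i => if i + 1 < N then bitsZMod b i * bitsZMod b (i + 1) else 0),
    ← Finset.sum_filter]
  congr 1
  ext i
  simp only [Finset.mem_filter, Finset.mem_range]
  omega

lemma natCast_fin_two_add_one (x : Fin 2) : (((x + 1 : Fin 2) : ℕ) : ZMod 2) = (x : ℕ) + 1 := by
  fin_cases x <;> decide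

lemma bitsZMod_flipEven {N : ℕ} (b : Fin N → Fin 2) {i : ℕ} (hi : i < N) :
    bitsZMod (fun j => if (j : ℕ) % 2 = 0 then b j + 1 else b j) i =
      bitsZMod b i + evenIndicator (ZMod 2) i := by
  unfold bitsZMod evenIndicator
  split_ifs <;> simp_all [natCast_fin_two_add_one]

theorem graphState_UX_symmetry_general
    (N : ℕ) (hodd : Odd N) :
    UX N *ᵥ graphState N = graphState N := by
  rw [UX_mulVec]
  funext b
  obtain ⟨m, rfl⟩ := hodd
  refine congrArg (· / _) (neg_one_pow_eq_of_natCast_zmod_two_eq ?_)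
  rw [natCast_graphState_exponent, natCast_graphState_exponent, Nat.add_sub_cancel]
  calc ∑ i ∈ Finset.range (2 * m), bitsZMod _ i * bitsZMod _ (i + 1)
      = ∑ i ∈ Finset.range (2 * m), (bitsZMod b i + evenIndicator (ZMod 2) i) *
          (bitsZMod b (i + 1) + evenIndicator (ZMod 2) (i + 1)) :=
        Finset.sum_congr rfl fun i hi => by
          have := Finset.mem_range.mp hi
          rw [bitsZMod_flipEven b (by omega), bitsZMod_flipEven b (by omega)]
    _ = ∑ i ∈ Finset.range (2 * m), bitsZMod b i * bitsZMod b (i + 1) := by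
        simp only [sum_range_edge_add_evenIndicator, CharTwo.two_eq_zero, zero_mul, add_zero]

/-- The ℤ₂ symmetry of the 1D graph state: the uniform `X`-string over the even
0-based sites fixes the 1D graph state, `U_X ψ_g = ψ_g`. -/
theorem graphState_UX_symmetry
    (N : ℕ) (hN : 3 ≤ N) (hodd : Odd N) :
    UX N *ᵥ graphState N = graphState N :=
  graphState_UX_symmetry_general N hodd
end
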